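/- Every feasible sequence (non-increasing integers f_1 ≥ ... ≥ f_n with total sum 0 and ∑_{i=1}^k f_i ≤ k(n−k) for all 1 ≤ k < n) is realizable as the imbalance sequence of a simple digraph, and conversely every imbalance sequence of a simple digraph is feasible. -/

import Mathlib

/-!
Necessity: the imbalances of the vertices in a set `S` add up to the net number of arcs leaving
`S`, which is at most `|S| (n - |S|)`. For a non-increasing sequence the first `k` entries have
the largest sum among all `k`-sets, so feasibility amounts to the cut inequalities
`∑_{i ∈ S} f i ≤ |S| (n - |S|)` for every `S`.

Sufficiency, by induction on `∑ |f i|`: move one unit from an entry `p` with `f p > 0` to an entry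
`q` with `f q < 0` (the cut inequalities survive: a set that became violated would, with `q`
exchanged for `p`, violate them for `f`), realize the new sequence, and push the unit back along a
path of residual arcs from `p` to `q`. Such a path exists, since otherwise the set reachable from
`p` has all its outgoing pairs saturated, so its cut inequality is tight for the new sequence and
fails for `f`.
-/

open Finset

/-- An `r`-digraph on `n` vertices: `A i j` is the number of arcs from `i` to `j`;
no loops, and at most `r` arcs (both directions counted) between any two distinct vertices. -/
def IsRDigraph (n r : ℕ) (A : Fin n → Fin n → ℕ) : Prop :=
  (∀ i, A i i = 0) ∧ ∀ i j, i ≠ j → A i j + A j i ≤ r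

/-- Imbalance of a vertex: outdegree minus indegree. -/
def imbalance {n : ℕ} (A : Fin n → Fin n → ℕ) (v : Fin n) : ℤ :=
  (∑ j, (A v j : ℤ)) - ∑ j, (A j v : ℤ)

/-- `b` lists the vertex imbalances of `A` (in some order given by a permutation). -/
def IsImbalanceSeq (n r : ℕ) (A : Fin n → Fin n → ℕ) (b : Fin n → ℤ) : Prop :=
  IsRDigraph n r A ∧ ∃ σ : Equiv.Perm (Fin n), ∀ i, b i = imbalance A (σ i)

/-- Sum of the first `k` entries of `b`. -/
def psum {n : ℕ} (b : Fin n → ℤ) (k : ℕ) : ℤ :=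
  ∑ i ∈ Finset.univ.filter (fun i : Fin n => (i : ℕ) < k), b i

/-- A non-increasing integer sequence is feasible: sums to zero and satisfies
$\sum_{i=1}^k f_i \le k(n-k)$ for all 1 ≤ k < n. -/
def Feasible (n : ℕ) (f : Fin n → ℤ) : Prop :=
  psum f n = 0 ∧ ∀ k : ℕ, 1 ≤ k → k < n → psum f k ≤ (k : ℤ) * ((n : ℤ) - k)

theorem Relation.ReflTransGen.exists_head_avoiding {α : Type*} {r : α → α → Prop} {a b : α}
    (h : Relation.ReflTransGen r a b) (hab : a ≠ b) :
    ∃ c, r a c ∧ Relation.ReflTransGen (fun x y => r x y ∧ x ≠ a ∧ y ≠ a) c b := by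
  induction h with
  | refl => exact absurd rfl hab
  | @tail c b _ hcb ih =>
    by_cases hca : c = a
    · exact ⟨b, hca ▸ hcb, .refl⟩
    · obtain ⟨d, had, hdc⟩ := ih (Ne.symm hca)
      exact ⟨d, had, hdc.tail ⟨hcb, hca, Ne.symm hab⟩⟩

theorem Finset.sum_le_sum_of_card_eq {ι M : Type*} [DecidableEq ι] [AddCommMonoid M]
    [LinearOrder M] [IsOrderedAddMonoid M] {s t : Finset ι} {f : ι → M} (hst : #s = #t)
    (h : ∀ x ∈ s \ t, ∀ y ∈ t \ s, f x ≤ f y) : ∑ i ∈ s, f i ≤ ∑ i ∈ t, f i := by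
  have hcard := card_sdiff_comm hst
  have hsdiff : ∑ i ∈ s \ t, f i ≤ ∑ i ∈ t \ s, f i := by
    obtain hts | ⟨y₀, hy₀, hmin⟩ := (t \ s).eq_empty_or_nonempty.imp_right (exists_min_image _ f)
    · rw [hts, card_eq_zero.mp (hcard.trans (by rw [hts, card_empty]))]
    calc ∑ i ∈ s \ t, f i ≤ #(s \ t) • f y₀ := sum_le_card_nsmul _ _ _ fun x hx => h x hx y₀ hy₀
      _ = #(t \ s) • f y₀ := by rw [hcard]
      _ ≤ ∑ i ∈ t \ s, f i := card_nsmul_le_sum _ _ _ hmin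
  rw [← sum_inter_add_sum_sdiff s t, ← sum_inter_add_sum_sdiff t s, inter_comm]
  exact add_le_add_right hsdiff _

section

variable {n : ℕ}

theorem Fin.card_filter_val_lt_of_le {k : ℕ} (hk : k ≤ n) : #{i : Fin n | (i : ℕ) < k} = k := by
  rw [Fin.card_filter_val_lt, min_eq_right hk]

theorem Fin.natCast_card_compl (S : Finset (Fin n)) : (#Sᶜ : ℤ) = n - #S := by
  rw [card_compl, Fintype.card_fin, Nat.cast_sub (card_finset_fin_le S)]

theorem psum_self (f : Fin n → ℤ) : psum f n = ∑ i, f i := by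
  simp [psum]

theorem Antitone.sum_le_psum {f : Fin n → ℤ} (hf : Antitone f) (S : Finset (Fin n)) :
    ∑ i ∈ S, f i ≤ psum f #S := by
  refine sum_le_sum_of_card_eq (Fin.card_filter_val_lt_of_le (card_finset_fin_le S)).symm
    fun x hx y hy => hf ?_
  simp only [mem_sdiff, mem_filter, mem_univ, true_and] at hx hy
  exact Fin.le_def.mpr (by omega)

theorem Feasible.sum_le {f : Fin n → ℤ} (h : Feasible n f) (hf : Antitone f)
    (S : Finset (Fin n)) : ∑ i ∈ S, f i ≤ #S * #Sᶜ := by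
  have hS : #S ≤ n := card_finset_fin_le S
  calc ∑ i ∈ S, f i ≤ psum f #S := hf.sum_le_psum S
    _ ≤ #S * (n - #S) := by
      rcases Nat.eq_zero_or_pos #S with h0 | hpos
      · simp [h0, psum]
      rcases hS.lt_or_eq with hlt | hn
      · exact h.2 _ hpos hlt
      · simp [hn, h.1]
    _ = #S * #Sᶜ := by rw [Fin.natCast_card_compl]

theorem sum_sub_single_add_single (g : Fin n → ℤ) (p q : Fin n) (S : Finset (Fin n)) :
    ∑ i ∈ S, (g - Pi.single p 1 + Pi.single q 1 : Fin n → ℤ) i =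
      ∑ i ∈ S, g i - (if p ∈ S then 1 else 0) + (if q ∈ S then 1 else 0) := by
  simp [sum_add_distrib, sum_sub_distrib]

theorem sum_sub_single_add_single_le {g : Fin n → ℤ}
    (hcut : ∀ S : Finset (Fin n), ∑ i ∈ S, g i ≤ #S * #Sᶜ) {p q : Fin n} (hpq : g q < g p)
    (S : Finset (Fin n)) :
    ∑ i ∈ S, (g - Pi.single p 1 + Pi.single q 1 : Fin n → ℤ) i ≤ #S * #Sᶜ := by
  rw [sum_sub_single_add_single]
  by_cases hq : q ∈ S
  · by_cases hp : p ∈ S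
    · simpa [hp, hq] using hcut S
    -- Exchanging `q` for `p` in `S` raises the sum by `g p - g q ≥ 1` without changing the bound.
    have hp' : p ∉ S.erase q := fun h => hp (mem_of_mem_erase h)
    have hsum : ∑ i ∈ insert p (S.erase q), g i = ∑ i ∈ S, g i - g q + g p := by
      rw [sum_insert hp', sum_erase_eq_sub hq]; ring
    have hcard : #(insert p (S.erase q)) = #S := by
      rw [card_insert_of_notMem hp', card_erase_of_mem hq,
        Nat.sub_add_cancel (card_pos.mpr ⟨q, hq⟩)]
    have := hcut (insert p (S.erase q))
    rw [hsum, card_compl, hcard, ← card_compl] at this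
    simp only [hp, hq, if_false, if_true]
    linarith
  · have hS := hcut S
    split_ifs <;> linarith

theorem imbalance_eq_sum_sub (A : Fin n → Fin n → ℕ) (i : Fin n) :
    imbalance A i = ∑ j, ((A i j : ℤ) - A j i) := by
  rw [imbalance, sum_sub_distrib]

theorem sum_imbalance_eq_sum_compl (A : Fin n → Fin n → ℕ) (S : Finset (Fin n)) :
    ∑ v ∈ S, imbalance A v = ∑ u ∈ S, ∑ v ∈ Sᶜ, ((A u v : ℤ) - A v u) := by
  have hinner : ∑ u ∈ S, ∑ v ∈ S, ((A u v : ℤ) - A v u) = 0 := by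
    simp only [sum_sub_distrib]
    rw [sum_comm (f := fun u v => (A v u : ℤ)), sub_self]
  simp_rw [imbalance_eq_sum_sub, ← sum_add_sum_compl S (fun v => (A _ v : ℤ) - A v _),
    sum_add_distrib, hinner, zero_add]

theorem sum_imbalance_univ (A : Fin n → Fin n → ℕ) : ∑ v, imbalance A v = 0 := by
  simp [sum_imbalance_eq_sum_compl]

/-- `u → v` is a residual arc of `A`: one more unit of imbalance can be moved from `v` to `u`
along the pair `{u, v}`, by adding the arc `u → v` or deleting the arc `v → u`. -/
def Residual (A : Fin n → Fin n → ℕ) (u v : Fin n) : Prop :=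
  u ≠ v ∧ A u v = 0

namespace IsRDigraph

variable {A : Fin n → Fin n → ℕ}

theorem sum_imbalance_le (hA : IsRDigraph n 1 A) (S : Finset (Fin n)) :
    ∑ v ∈ S, imbalance A v ≤ #S * #Sᶜ := by
  rw [sum_imbalance_eq_sum_compl]
  calc ∑ u ∈ S, ∑ v ∈ Sᶜ, ((A u v : ℤ) - A v u) ≤ ∑ u ∈ S, ∑ v ∈ Sᶜ, 1 := by
        refine sum_le_sum fun u hu => sum_le_sum fun v hv => ?_
        have := hA.2 u v (ne_of_mem_of_not_mem hu (mem_compl.mp hv))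
        omega
    _ = #S * #Sᶜ := by simp

theorem sum_imbalance_eq_of_closed (hA : IsRDigraph n 1 A) {S : Finset (Fin n)}
    (hS : ∀ u ∈ S, ∀ v, Residual A u v → v ∈ S) :
    ∑ v ∈ S, imbalance A v = #S * #Sᶜ := by
  rw [sum_imbalance_eq_sum_compl]
  calc ∑ u ∈ S, ∑ v ∈ Sᶜ, ((A u v : ℤ) - A v u) = ∑ u ∈ S, ∑ v ∈ Sᶜ, 1 := by
        refine sum_congr rfl fun u hu => sum_congr rfl fun v hv => ?_
        have huv := ne_of_mem_of_not_mem hu (mem_compl.mp hv)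
        have hfull : A u v ≠ 0 := fun h => mem_compl.mp hv (hS u hu v ⟨huv, h⟩)
        have := hA.2 u v huv
        omega
    _ = #S * #Sᶜ := by simp

theorem reflTransGen_residual (hA : IsRDigraph n 1 A) {p q : Fin n}
    (h : ∀ S : Finset (Fin n), p ∈ S → q ∉ S → ∑ v ∈ S, imbalance A v < #S * #Sᶜ) :
    Relation.ReflTransGen (Residual A) p q := by
  classical
  by_contra hpq
  let S := univ.filter (Relation.ReflTransGen (Residual A) p)
  have hclosed : ∀ u ∈ S, ∀ v, Residual A u v → v ∈ S := fun u hu v huv => by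
    simp only [S, mem_filter, mem_univ, true_and] at hu ⊢
    exact hu.tail huv
  exact (h S (by simp [S, Relation.ReflTransGen.refl]) (by simpa [S] using hpq)).ne
    (hA.sum_imbalance_eq_of_closed hclosed)

theorem exists_push (hA : IsRDigraph n 1 A) {u v : Fin n} (huv : Residual A u v) :
    ∃ B, IsRDigraph n 1 B ∧ (∀ x y, x ≠ u → y ≠ u → B x y = A x y) ∧
      imbalance B = imbalance A + Pi.single u 1 - Pi.single v 1 := by
  obtain ⟨hne, hfree⟩ := huv
  have hvu := hA.2 v u hne.symm
  let B : Fin n → Fin n → ℕ := fun x y =>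
    if x = u ∧ y = v then 1 - A v u else if x = v ∧ y = u then 0 else A x y
  have hnet : ∀ x y, ((B x y : ℤ) - B y x) =
      (A x y - A y x) + ((if x = u ∧ y = v then 1 else 0) - (if x = v ∧ y = u then 1 else 0)) := by
    intro x y
    by_cases hx : x = u ∧ y = v
    · obtain ⟨rfl, rfl⟩ := hx
      simp [B, hne, hne.symm, hfree]
      omega
    by_cases hy : x = v ∧ y = u
    · obtain ⟨rfl, rfl⟩ := hy
      simp [B, hne, hne.symm, hfree]
      omega
    simp [B, hx, hy, and_comm]
  refine ⟨B, ⟨fun i => ?_, fun x y hxy => ?_⟩, fun x y hx hy => ?_, funext fun i => ?_⟩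
  · simp only [B, hA.1 i]
    grind
  · have := hA.2 x y hxy
    simp only [B]
    split_ifs <;> grind
  · simp [B, hx, hy]
  · simp only [imbalance_eq_sum_sub, hnet, sum_add_distrib, sum_sub_distrib, Pi.add_apply,
      Pi.sub_apply, Pi.single_apply, ite_and, sum_ite_irrel, sum_ite_eq', mem_univ, if_true,
      sum_const_zero]
    ring

theorem exists_push_of_reflTransGen (hA : IsRDigraph n 1 A) {p q : Fin n}
    (h : Relation.ReflTransGen (Residual A) p q) :
    ∃ B, IsRDigraph n 1 B ∧ imbalance B = imbalance A + Pi.single p 1 - Pi.single q 1 := by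
  -- Induct on the set `U` of vertices the path may use; after the first push the rest of the
  -- path avoids `p`, so the arcs it uses are untouched.
  suffices key : ∀ (U : Finset (Fin n)) (A : Fin n → Fin n → ℕ) (p : Fin n), IsRDigraph n 1 A →
      Relation.ReflTransGen (fun x y => Residual A x y ∧ x ∈ U ∧ y ∈ U) p q →
      ∃ B, IsRDigraph n 1 B ∧ imbalance B = imbalance A + Pi.single p 1 - Pi.single q 1 from
    key univ A p hA
      (Relation.ReflTransGen.mono (fun x y hxy => ⟨hxy, mem_univ x, mem_univ y⟩) _ _ h)
  intro U
  induction U using Finset.strongInduction with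
  | H U ih =>
  intro A p hA h
  by_cases hpq : p = q
  · exact ⟨A, hA, by rw [hpq, add_sub_cancel_right]⟩
  obtain ⟨v, ⟨hpv, hpU, -⟩, hvq⟩ := h.exists_head_avoiding hpq
  obtain ⟨B, hB, hBA, himbB⟩ := hA.exists_push hpv
  have hvq' : Relation.ReflTransGen
      (fun x y => Residual B x y ∧ x ∈ U.erase p ∧ y ∈ U.erase p) v q :=
    Relation.ReflTransGen.mono (fun x y ⟨⟨⟨hxy, hfree⟩, hx, hy⟩, hxp, hyp⟩ =>
      ⟨⟨hxy, (hBA x y hxp hyp).trans hfree⟩, mem_erase.mpr ⟨hxp, hx⟩, mem_erase.mpr ⟨hyp, hy⟩⟩)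
      _ _ hvq
  obtain ⟨C, hC, himbC⟩ := ih (U.erase p) (erase_ssubset hpU) B v hB hvq'
  exact ⟨C, hC, by rw [himbC, himbB]; abel⟩

end IsRDigraph

theorem IsImbalanceSeq.feasible {A : Fin n → Fin n → ℕ} {f : Fin n → ℤ}
    (h : IsImbalanceSeq n 1 A f) : Feasible n f := by
  obtain ⟨hA, σ, hf⟩ := h
  refine ⟨?_, fun k _ hk => ?_⟩
  · simp only [psum_self, hf, Equiv.sum_comp σ (imbalance A), sum_imbalance_univ]
  set S := ({i : Fin n | (i : ℕ) < k} : Finset (Fin n)).map σ.toEmbedding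
  calc psum f k = ∑ v ∈ S, imbalance A v := by simp [psum, S, hf]
    _ ≤ #S * #Sᶜ := hA.sum_imbalance_le S
    _ = k * (n - k) := by rw [Fin.natCast_card_compl, card_map, Fin.card_filter_val_lt_of_le hk.le]

theorem exists_isRDigraph_imbalance_eq (g : Fin n → ℤ) (hsum : ∑ i, g i = 0)
    (hcut : ∀ S : Finset (Fin n), ∑ i ∈ S, g i ≤ #S * #Sᶜ) :
    ∃ A, IsRDigraph n 1 A ∧ imbalance A = g := by
  induction hm : ∑ i, (g i).natAbs using Nat.strong_induction_on generalizing g with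
  | _ m ih =>
  by_cases hg : g = 0
  · exact ⟨0, ⟨fun _ => rfl, fun _ _ _ => zero_le_one⟩, by subst hg; funext i; simp [imbalance]⟩
  have hnz : ∃ i ∈ univ, g i ≠ 0 := by simpa [funext_iff] using hg
  obtain ⟨p, -, hp⟩ := exists_pos_of_sum_zero_of_exists_nonzero g hsum hnz
  obtain ⟨q, -, hq⟩ := exists_pos_of_sum_zero_of_exists_nonzero (s := univ) (-g)
    (by simp [hsum]) (by simpa using hnz)
  simp only [Pi.neg_apply, Left.neg_pos_iff] at hq
  set g' := g - Pi.single p 1 + Pi.single q 1 with hg'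
  have hsum' : ∑ i, g' i = 0 := by
    rw [hg', sum_sub_single_add_single]; simp [hsum]
  have hlt : ∑ i, (g' i).natAbs < m := by
    rw [← hm]
    refine sum_lt_sum (fun i _ => ?_) ⟨p, mem_univ p, ?_⟩ <;>
      simp only [g', Pi.add_apply, Pi.sub_apply, Pi.single_apply] <;> split_ifs <;> subst_vars <;>
      omega
  obtain ⟨A, hA, himb⟩ := ih _ hlt g' hsum' (sum_sub_single_add_single_le hcut (by omega)) rfl
  have hreach := hA.reflTransGen_residual fun S hpS hqS => by
    have := hcut S
    rw [himb, sum_sub_single_add_single, if_pos hpS, if_neg hqS]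
    linarith
  obtain ⟨B, hB, himbB⟩ := hA.exists_push_of_reflTransGen hreach
  exact ⟨B, hB, by rw [himbB, himb, hg']; abel⟩

end

/-- A non-increasing sequence is the imbalance sequence of a simple digraph
(an r-digraph with r = 1) iff it is feasible. -/
theorem stmt16 (n : ℕ) (f : Fin n → ℤ) (hanti : Antitone f) :
    (∃ A : Fin n → Fin n → ℕ, IsImbalanceSeq n 1 A f) ↔ Feasible n f := by
  refine ⟨fun ⟨A, hA⟩ => hA.feasible, fun h => ?_⟩
  obtain ⟨A, hA, himb⟩ :=
    exists_isRDigraph_imbalance_eq f (by rw [← psum_self, h.1]) (h.sum_le hanti)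
  exact ⟨A, hA, Equiv.refl _, fun i => by simp [himb]⟩
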